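/- Let (p̲^A_i, p̄^A_i)_{i=1}^n be a good coherent probability interval on E_A = {a_1,…,a_n} with associated standard good mass m_A, and for each i = 1,…,n let numbers p̲^i_j, p̄^i_j ∈ [0,1] with p̲^i_j ≤ p̄^i_j be given (j fixed). Define p̄^B_j = 1 − Σ_{V ⊆ E_A} m_A(V) ∏_{i : a_i ∈ V} (1 − p̄^i_j). Then p̄^B_j ≥ max Σ_{i=1}^n y_i x_i, where the maximum is over all x_i ∈ [p̲^A_i, p̄^A_i] with Σ_{i=1}^n x_i = 1 and all y_i ∈ [p̲^i_j, p̄^i_j]. -/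

import Mathlib

/-!
Write `tᵢ = xᵢ - p̲ᴬᵢ ≥ 0`, `cₖ = m_A(E_A ∖ {aₖ})` and `T = 1 - S̲`. Then `∑ tᵢ = ∑ cₖ + Δ = T`,
and the upper bound `xₖ ≤ p̄ᴬₖ` reads `tₖ + cₖ ≤ T`. These constraints are exactly what is needed
to spread the mass `tᵢ` over the focal sets of `m_A` containing `aᵢ`, so `x` is dominated by `m_A` and
`∑ hᵢ xᵢ ≤ ∑_V m_A(V) · max_{i ∈ V} hᵢ`. Finally `max_{i ∈ V} hᵢ ≤ 1 - ∏_{i ∈ V} (1 - hᵢ)` and `m_A`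
has total mass one.
-/

open Finset

/-- A Dempster–Shafer mass function on the finite type `α`:
nonnegative, at most one, vanishing on `∅`, and summing to one. -/
def IsMass {α : Type*} [Fintype α] [DecidableEq α] (m : Finset α → ℝ) : Prop :=
  m ∅ = 0 ∧ (∀ V : Finset α, 0 ≤ m V ∧ m V ≤ 1) ∧ (∑ V : Finset α, m V) = 1

/-- The belief function associated to a mass function: `Bel m W = ∑_{V ⊆ W} m V`. -/
def Bel {α : Type*} [Fintype α] [DecidableEq α] (m : Finset α → ℝ) (W : Finset α) : ℝ :=
  ∑ V ∈ Finset.univ.filter (fun V : Finset α => V ⊆ W), m V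

/-- The plausibility function associated to a mass function:
`Pl m W = ∑_{V ∩ W ≠ ∅} m V`. -/
def Pl {α : Type*} [Fintype α] [DecidableEq α] (m : Finset α → ℝ) (W : Finset α) : ℝ :=
  ∑ V ∈ Finset.univ.filter (fun V : Finset α => (V ∩ W).Nonempty), m V

/-- A coherent probability interval `(lo i, hi i)_{i}` on `Fin n`:
componentwise bounds `0 ≤ lo ≤ hi ≤ 1`, together with [Coh1], [Coh2], [Coh3]. -/
def IsCoherent {n : ℕ} (lo hi : Fin n → ℝ) : Prop :=
  (∀ i, 0 ≤ lo i ∧ lo i ≤ hi i ∧ hi i ≤ 1) ∧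
  (∑ i, lo i) ≤ 1 ∧ 1 ≤ (∑ i, hi i) ∧
  (∀ i, 1 - ∑ h ∈ Finset.univ.erase i, hi h ≤ lo i) ∧
  (∀ i, hi i ≤ 1 - ∑ h ∈ Finset.univ.erase i, lo h)

/-- `Δ = S̄ + (n-2)S̲ - (n-1)` for a probability interval. -/
def intervalDelta {n : ℕ} (lo hi : Fin n → ℝ) : ℝ :=
  (∑ i, hi i) + ((n : ℝ) - 2) * (∑ i, lo i) - ((n : ℝ) - 1)

/-- A *good* coherent probability interval: coherent and `Δ ≥ 0`. -/
def IsGood {n : ℕ} (lo hi : Fin n → ℝ) : Prop :=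
  IsCoherent lo hi ∧ 0 ≤ intervalDelta lo hi

/-- The standard good mass (SGM) associated to a (good coherent) probability interval:
mass `lo i` on each singleton `{a_i}`, mass `1 - hi i - ∑_{h ≠ i} lo h` on each
complement `univ ∖ {a_i}`, mass `Δ` on `univ`, and `0` on every other set. -/
def SGM {n : ℕ} (lo hi : Fin n → ℝ) (V : Finset (Fin n)) : ℝ :=
  (∑ i ∈ Finset.univ.filter (fun i : Fin n => V = {i}), lo i)
  + (∑ i ∈ Finset.univ.filter (fun i : Fin n => V = Finset.univ \ {i}),
      (1 - hi i - ∑ h ∈ Finset.univ.erase i, lo h))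
  + (if V = Finset.univ then intervalDelta lo hi else 0)

/-- The mass `m_A(E_A ∖ {aₖ})` of the standard good mass. -/
def sgmComplMass {n : ℕ} (loA hiA : Fin n → ℝ) (k : Fin n) : ℝ :=
  1 - hiA k - ∑ h ∈ univ.erase k, loA h

lemma sgmComplMass_eq {n : ℕ} (loA hiA : Fin n → ℝ) (k : Fin n) :
    sgmComplMass loA hiA k = 1 - ∑ i, loA i - (hiA k - loA k) := by
  rw [sgmComplMass, sum_erase_eq_sub (mem_univ k)]
  ring

lemma sum_sgmComplMass_add_intervalDelta {n : ℕ} (loA hiA : Fin n → ℝ) :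
    ∑ k, sgmComplMass loA hiA k + intervalDelta loA hiA = 1 - ∑ i, loA i := by
  simp only [sgmComplMass_eq, sum_sub_distrib, sum_const, card_univ, Fintype.card_fin,
    nsmul_eq_mul, mul_one, intervalDelta]
  ring

lemma sum_SGM_mul {n : ℕ} (loA hiA : Fin n → ℝ) (g : Finset (Fin n) → ℝ) :
    ∑ V, SGM loA hiA V * g V
      = ∑ i, loA i * g {i} + ∑ k, sgmComplMass loA hiA k * g (univ \ {k})
        + intervalDelta loA hiA * g univ := by
  simp only [SGM, add_mul, sum_add_distrib, sum_mul, ite_mul, zero_mul, sum_filter]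
  congr 1
  · congr 1 <;> rw [sum_comm] <;> simp [sum_ite_eq', sgmComplMass]
  · simp

lemma sum_SGM {n : ℕ} (loA hiA : Fin n → ℝ) : ∑ V, SGM loA hiA V = 1 := by
  have := sum_SGM_mul loA hiA 1
  simp only [Pi.one_apply, mul_one] at this
  linarith [sum_sgmComplMass_add_intervalDelta loA hiA]

/-- Here `G k` and `U` stand for the values on `univ \ {k}` and on `univ`. With `i₁` an argmax
of `h` and `a = min (h i₁) (G i₁)`, the left side is at most `h i₁ * t i₁ + a * (T - t i₁)` and the
right side at least `c i₁ * a + (T - c i₁) * h i₁`, where `T = ∑ t`; the difference is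
`(h i₁ - a) * (T - c i₁ - t i₁) ≥ 0`. -/
lemma sum_mul_le_of_transport {ι : Type*} [Fintype ι] [DecidableEq ι] [Nonempty ι]
    (t c h G : ι → ℝ) (Δ U : ℝ) (ht : ∀ i, 0 ≤ t i) (hc : ∀ k, 0 ≤ c k) (hΔ : 0 ≤ Δ)
    (hsum : ∑ k, c k + Δ = ∑ i, t i) (hcap : ∀ k, t k + c k ≤ ∑ i, t i)
    (hG : ∀ i k, i ≠ k → h i ≤ G k) (hU : ∀ i, h i ≤ U) :
    ∑ i, h i * t i ≤ ∑ k, c k * G k + Δ * U := by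
  obtain ⟨i₁, -, hmax⟩ := exists_max_image univ h univ_nonempty
  set a := min (h i₁) (G i₁)
  have hrest : ∑ i ∈ univ.erase i₁, h i * t i ≤ a * (∑ i, t i - t i₁) := by
    rw [← sum_erase_eq_sub (mem_univ i₁), mul_sum]
    refine sum_le_sum fun i hi => mul_le_mul_of_nonneg_right ?_ (ht i)
    exact le_min (hmax i (mem_univ i)) (hG i i₁ (ne_of_mem_erase hi))
  have hcompl : h i₁ * (∑ i, t i - Δ - c i₁) ≤ ∑ k ∈ univ.erase i₁, c k * G k := by
    rw [← hsum, add_sub_cancel_right, ← sum_erase_eq_sub (mem_univ i₁), mul_sum]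
    refine sum_le_sum fun k hk => ?_
    rw [mul_comm]
    exact mul_le_mul_of_nonneg_left (hG i₁ k (ne_of_mem_erase hk).symm) (hc k)
  have ha : c i₁ * a ≤ c i₁ * G i₁ := mul_le_mul_of_nonneg_left (min_le_right _ _) (hc i₁)
  have hUΔ : Δ * h i₁ ≤ Δ * U := mul_le_mul_of_nonneg_left (hU i₁) hΔ
  have hslack : 0 ≤ (h i₁ - a) * (∑ i, t i - c i₁ - t i₁) :=
    mul_nonneg (sub_nonneg.2 (min_le_left _ _)) (by linarith [hcap i₁])
  rw [← add_sum_erase _ _ (mem_univ i₁), ← add_sum_erase _ _ (mem_univ i₁)]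
  linarith

lemma sum_mul_le_sum_SGM_mul {n : ℕ} {loA hiA : Fin n → ℝ} (hA : IsGood loA hiA)
    {x : Fin n → ℝ} (hx : ∀ i, loA i ≤ x i ∧ x i ≤ hiA i) (hxs : ∑ i, x i = 1)
    (h : Fin n → ℝ) (g : Finset (Fin n) → ℝ) (hg : ∀ V, ∀ i ∈ V, h i ≤ g V) :
    ∑ i, h i * x i ≤ ∑ V, SGM loA hiA V * g V := by
  obtain ⟨⟨hbdA, -, -, -, hcoh3⟩, hΔ⟩ := hA
  have : Nonempty (Fin n) := by
    by_contra hempty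
    simp [not_nonempty_iff.1 hempty] at hxs
  have hsingle : ∑ i, loA i * h i ≤ ∑ i, loA i * g {i} :=
    sum_le_sum fun i _ => mul_le_mul_of_nonneg_left (hg _ i (mem_singleton_self i)) (hbdA i).1
  have ht_sum : ∑ i, (x i - loA i) = 1 - ∑ i, loA i := by rw [sum_sub_distrib, hxs]
  have htransport := sum_mul_le_of_transport (fun i => x i - loA i) (sgmComplMass loA hiA) h
    (fun k => g (univ \ {k})) (intervalDelta loA hiA) (g univ)
    (fun i => sub_nonneg.2 (hx i).1)
    (fun k => by have := hcoh3 k; rw [sgmComplMass]; linarith) hΔ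
    (by rw [ht_sum, sum_sgmComplMass_add_intervalDelta])
    (fun k => by rw [ht_sum, sgmComplMass_eq]; linarith [(hx k).2])
    (fun i k hik => hg _ i (by simpa using hik))
    (fun i => hg _ i (mem_univ i))
  have hsplit : ∑ i, h i * x i = ∑ i, loA i * h i + ∑ i, h i * (x i - loA i) := by
    rw [← sum_add_distrib]
    exact sum_congr rfl fun i _ => by ring
  rw [sum_SGM_mul, hsplit]
  linarith

lemma le_one_sub_prod_one_sub {ι : Type*} {s : Finset ι} {p : ι → ℝ}
    (hp : ∀ i ∈ s, 0 ≤ p i ∧ p i ≤ 1) {i : ι} (hi : i ∈ s) :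
    p i ≤ 1 - ∏ j ∈ s, (1 - p j) := by
  have : ∏ j ∈ s, (1 - p j) ≤ ∏ j ∈ {i}, (1 - p j) :=
    prod_le_prod_of_subset_of_le_one (singleton_subset_iff.2 hi)
      (fun j hj => sub_nonneg.2 (hp j hj).2) (fun j hj _ => by linarith [(hp j hj).1])
  rw [prod_singleton] at this
  linarith

/-- Let `(loA, hiA)` be a good coherent probability interval on
`E_A = Fin n` with standard good mass `mA = SGM loA hiA`, and for a fixed `j` let
`lo i ≤ hi i` in `[0,1]` be conditional bounds. Then
`p̄ᴮⱼ = 1 - ∑_{V ⊆ E_A} mA(V) ∏_{i ∈ V} (1 - hi i)` is above `∑ᵢ yᵢ xᵢ` for every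
choice of `xᵢ ∈ [loA i, hiA i]` with `∑ᵢ xᵢ = 1` and `yᵢ ∈ [lo i, hi i]`; that is,
it is an upper bound on the credal maximum. -/
theorem sgm_upper_is_credal_upper_bound (n : ℕ) (loA hiA : Fin n → ℝ)
    (hA : IsGood loA hiA)
    (lo hi : Fin n → ℝ) (hbd : ∀ i, 0 ≤ lo i ∧ lo i ≤ hi i ∧ hi i ≤ 1)
    (x : Fin n → ℝ) (hx : ∀ i, loA i ≤ x i ∧ x i ≤ hiA i) (hxs : (∑ i, x i) = 1)
    (y : Fin n → ℝ) (hy : ∀ i, lo i ≤ y i ∧ y i ≤ hi i) :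
    ∑ i, y i * x i ≤ 1 - ∑ V : Finset (Fin n), SGM loA hiA V * ∏ i ∈ V, (1 - hi i) := by
  have hhi : ∀ i, 0 ≤ hi i ∧ hi i ≤ 1 := fun i => ⟨(hbd i).1.trans (hbd i).2.1, (hbd i).2.2⟩
  calc ∑ i, y i * x i ≤ ∑ i, hi i * x i :=
        sum_le_sum fun i _ =>
          mul_le_mul_of_nonneg_right (hy i).2 ((hA.1.1 i).1.trans (hx i).1)
    _ ≤ ∑ V, SGM loA hiA V * (1 - ∏ i ∈ V, (1 - hi i)) :=
        sum_mul_le_sum_SGM_mul hA hx hxs hi _ fun V i hiV =>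
          le_one_sub_prod_one_sub (fun j _ => hhi j) hiV
    _ = 1 - ∑ V, SGM loA hiA V * ∏ i ∈ V, (1 - hi i) := by
        simp only [mul_sub, mul_one, sum_sub_distrib, sum_SGM]
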